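/- arXiv:2602.19241 — 8 statements merged into one kernel-verified Lean document; each statement's English description precedes it below -/
import Mathlib

section
/- Let A, B, X be d×d real symmetric positive semidefinite matrices with A and B positive definite and A ⪯ B in the Loewner order. Then the minimum eigenvalue of (A+X)^{-1/2} A (A+X)^{-1/2} is at most the minimum eigenvalue of (B+X)^{-1/2} B (B+X)^{-1/2}, and the maximum eigenvalue of (A+X)^{-1/2} A (A+X)^{-1/2} is at most that of (B+X)^{-1/2} B (B+X)^{-1/2}. -/
/-!
Write `S = (A+X)^{-1/2}`. Since `S (A+X) S = 1`, the substitution `u = S v` turns the ordinary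
Rayleigh quotient of `S A S` into the generalized quotient `uᵀAu / uᵀ(A+X)u`, so the extreme
eigenvalues of `S A S` are the minimum and maximum of `uᵀAu / (uᵀAu + uᵀXu)` over `u ≠ 0`.
For each fixed `u` this is `a / (a + x)` with `x ≥ 0`, which is monotone in `a`, and `A ⪯ B`
makes `uᵀAu ≤ uᵀBu`.
-/

open scoped Classical

/-- The minimum eigenvalue of a (Hermitian) real matrix; junk value `0` otherwise. -/
noncomputable def minEig {d : ℕ} (M : Matrix (Fin d) (Fin d) ℝ) : ℝ :=
  if h : M.IsHermitian then ⨅ i, h.eigenvalues i else 0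

/-- The maximum eigenvalue of a (Hermitian) real matrix; junk value `0` otherwise. -/
noncomputable def maxEig {d : ℕ} (M : Matrix (Fin d) (Fin d) ℝ) : ℝ :=
  if h : M.IsHermitian then ⨆ i, h.eigenvalues i else 0

/-- `M^{-1/2}`: the positive-semidefinite square root of `M⁻¹`; junk value `0` otherwise. -/
noncomputable def invSqrt {d : ℕ} (M : Matrix (Fin d) (Fin d) ℝ) :
    Matrix (Fin d) (Fin d) ℝ :=
  if h : (M⁻¹).PosSemidef then
    h.1.eigenvectorUnitary.1 * Matrix.diagonal ((↑) ∘ (√·) ∘ h.1.eigenvalues) *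
      (star h.1.eigenvectorUnitary : Matrix (Fin d) (Fin d) ℝ) else 0

open Matrix Unitary
open scoped ComplexOrder MatrixOrder

lemma div_add_le_div_add_of_le {K : Type*} [Field K] [LinearOrder K] [IsStrictOrderedRing K]
    {a b x : K} (ha : 0 < a) (hab : a ≤ b) (hx : 0 ≤ x) :
    a / (a + x) ≤ b / (b + x) := by
  rw [div_le_div_iff₀ (by linarith) (by linarith)]
  nlinarith

namespace Matrix

section GenRayleigh

variable {n : Type*} [Fintype n]

noncomputable def genRayleigh (C P : Matrix n n ℝ) (u : n → ℝ) : ℝ :=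
  u ⬝ᵥ (C *ᵥ u) / (u ⬝ᵥ (P *ᵥ u))

lemma genRayleigh_one_of_mulVec_eq_smul [DecidableEq n] {M : Matrix n n ℝ} {v : n → ℝ}
    {c : ℝ} (hv : v ≠ 0) (hMv : M *ᵥ v = c • v) : genRayleigh M 1 v = c := by
  have hvv : v ⬝ᵥ v ≠ 0 := fun h ↦ hv (dotProduct_self_eq_zero.mp h)
  rw [genRayleigh, hMv, one_mulVec, dotProduct_smul, smul_eq_mul, mul_div_assoc, div_self hvv,
    mul_one]

lemma dotProduct_transpose_mul_mul_mulVec (S C : Matrix n n ℝ) (v : n → ℝ) :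
    v ⬝ᵥ ((Sᵀ * C * S) *ᵥ v) = (S *ᵥ v) ⬝ᵥ (C *ᵥ (S *ᵥ v)) := by
  rw [mul_assoc, ← mulVec_mulVec, dotProduct_mulVec, vecMul_transpose, ← mulVec_mulVec]

lemma genRayleigh_transpose_mul_mul (S C P : Matrix n n ℝ) (v : n → ℝ) :
    genRayleigh (Sᵀ * C * S) (Sᵀ * P * S) v = genRayleigh C P (S *ᵥ v) := by
  simp only [genRayleigh, dotProduct_transpose_mul_mul_mulVec]

lemma image_genRayleigh_transpose_mul_mul [DecidableEq n] {S : Matrix n n ℝ} (hS : IsUnit S)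
    (C P : Matrix n n ℝ) :
    genRayleigh (Sᵀ * C * S) (Sᵀ * P * S) '' {v | v ≠ 0} =
      genRayleigh C P '' {u | u ≠ 0} := by
  have hmap : (S *ᵥ ·) '' {v : n → ℝ | v ≠ 0} = {u | u ≠ 0} := by
    ext u
    constructor
    · rintro ⟨v, hv, rfl⟩
      exact fun h ↦ hv (mulVec_injective_iff_isUnit.mpr hS (h.trans (mulVec_zero S).symm))
    · intro hu
      obtain ⟨v, rfl⟩ := mulVec_surjective_iff_isUnit.mpr hS u
      exact ⟨v, fun h ↦ hu (by rw [h, mulVec_zero]), rfl⟩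
  conv_rhs => rw [← hmap, Set.image_image]
  simp only [genRayleigh_transpose_mul_mul]

lemma genRayleigh_le_genRayleigh_add {A B X : Matrix n n ℝ} (hA : A.PosDef)
    (hAB : (B - A).PosSemidef) (hX : X.PosSemidef) {u : n → ℝ} (hu : u ≠ 0) :
    genRayleigh A (A + X) u ≤ genRayleigh B (B + X) u := by
  have hAu : 0 < u ⬝ᵥ (A *ᵥ u) := by simpa using hA.dotProduct_mulVec_pos hu
  have hABu : 0 ≤ u ⬝ᵥ ((B - A) *ᵥ u) := by simpa using hAB.dotProduct_mulVec_nonneg u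
  have hXu : 0 ≤ u ⬝ᵥ (X *ᵥ u) := by simpa using hX.dotProduct_mulVec_nonneg u
  rw [sub_mulVec, dotProduct_sub, sub_nonneg] at hABu
  simp only [genRayleigh, add_mulVec, dotProduct_add]
  exact div_add_le_div_add_of_le hAu hABu hXu

end GenRayleigh

namespace IsHermitian

section Shift

variable {n 𝕜 : Type*} [Fintype n] [DecidableEq n] [RCLike 𝕜] {M : Matrix n n 𝕜}

lemma sub_smul_one_eq (hM : M.IsHermitian) (c : ℝ) :
    M - c • 1 = conjStarAlgAut 𝕜 _ hM.eigenvectorUnitary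
      (diagonal (RCLike.ofReal ∘ (hM.eigenvalues - Function.const n c))) := by
  conv_lhs => rw [hM.spectral_theorem]
  rw [RCLike.real_smul_eq_coe_smul (K := 𝕜),
    ← map_one (conjStarAlgAut 𝕜 _ hM.eigenvectorUnitary), ← map_smul, ← map_sub,
    smul_one_eq_diagonal, diagonal_sub]
  congr 2
  ext i
  simp

lemma posSemidef_sub_smul_one (hM : M.IsHermitian) {c : ℝ} (hc : ∀ i, c ≤ hM.eigenvalues i) :
    (M - c • 1).PosSemidef := by
  rw [hM.sub_smul_one_eq, conjStarAlgAut_apply, isUnit_coe.posSemidef_star_right_conjugate_iff,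
    posSemidef_diagonal_iff]
  intro i
  simpa using hc i

lemma posSemidef_smul_one_sub (hM : M.IsHermitian) {c : ℝ} (hc : ∀ i, hM.eigenvalues i ≤ c) :
    (c • 1 - M).PosSemidef := by
  rw [← neg_sub, hM.sub_smul_one_eq, ← map_neg, diagonal_neg, conjStarAlgAut_apply,
    isUnit_coe.posSemidef_star_right_conjugate_iff, posSemidef_diagonal_iff]
  intro i
  simpa using hc i

end Shift

section ExtremeEigenvalues

variable {d : ℕ} {M : Matrix (Fin d) (Fin d) ℝ}

lemma minEig_le_eigenvalues (hM : M.IsHermitian) (i : Fin d) : minEig M ≤ hM.eigenvalues i := by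
  rw [minEig, dif_pos hM]
  exact ciInf_le (Set.finite_range _).bddBelow i

lemma eigenvalues_le_maxEig (hM : M.IsHermitian) (i : Fin d) : hM.eigenvalues i ≤ maxEig M := by
  rw [maxEig, dif_pos hM]
  exact le_ciSup (Set.finite_range _).bddAbove i

lemma exists_eigenvalues_eq_minEig [Nonempty (Fin d)] (hM : M.IsHermitian) :
    ∃ i, hM.eigenvalues i = minEig M := by
  rw [minEig, dif_pos hM]
  exact exists_eq_ciInf_of_finite

lemma exists_eigenvalues_eq_maxEig [Nonempty (Fin d)] (hM : M.IsHermitian) :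
    ∃ i, hM.eigenvalues i = maxEig M := by
  rw [maxEig, dif_pos hM]
  exact exists_eq_ciSup_of_finite

lemma eigenvectorBasis_ne_zero (hM : M.IsHermitian) (i : Fin d) :
    (hM.eigenvectorBasis i : Fin d → ℝ) ≠ 0 := fun h ↦
  hM.eigenvectorBasis.orthonormal.ne_zero i (by ext j; exact congrFun h j)

lemma minEig_le_genRayleigh_one (hM : M.IsHermitian) {v : Fin d → ℝ} (hv : v ≠ 0) :
    minEig M ≤ genRayleigh M 1 v := by
  have hvv : 0 < v ⬝ᵥ v := by simpa using PosDef.one.dotProduct_mulVec_pos hv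
  have hq := (hM.posSemidef_sub_smul_one hM.minEig_le_eigenvalues).dotProduct_mulVec_nonneg v
  simp only [star_trivial, sub_mulVec, dotProduct_sub, smul_mulVec, one_mulVec, dotProduct_smul,
    smul_eq_mul, sub_nonneg] at hq
  rwa [genRayleigh, one_mulVec, le_div_iff₀ hvv]

lemma genRayleigh_one_le_maxEig (hM : M.IsHermitian) {v : Fin d → ℝ} (hv : v ≠ 0) :
    genRayleigh M 1 v ≤ maxEig M := by
  have hvv : 0 < v ⬝ᵥ v := by simpa using PosDef.one.dotProduct_mulVec_pos hv
  have hq := (hM.posSemidef_smul_one_sub hM.eigenvalues_le_maxEig).dotProduct_mulVec_nonneg v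
  simp only [star_trivial, sub_mulVec, dotProduct_sub, smul_mulVec, one_mulVec, dotProduct_smul,
    smul_eq_mul, sub_nonneg] at hq
  rwa [genRayleigh, one_mulVec, div_le_iff₀ hvv]

lemma isLeast_minEig [Nonempty (Fin d)] (hM : M.IsHermitian) :
    IsLeast (genRayleigh M 1 '' {v | v ≠ 0}) (minEig M) := by
  obtain ⟨i, hi⟩ := hM.exists_eigenvalues_eq_minEig
  refine ⟨⟨_, hM.eigenvectorBasis_ne_zero i, ?_⟩, ?_⟩
  · rw [genRayleigh_one_of_mulVec_eq_smul (hM.eigenvectorBasis_ne_zero i)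
      (hM.mulVec_eigenvectorBasis i), hi]
  · rintro _ ⟨v, hv, rfl⟩
    exact hM.minEig_le_genRayleigh_one hv

lemma isGreatest_maxEig [Nonempty (Fin d)] (hM : M.IsHermitian) :
    IsGreatest (genRayleigh M 1 '' {v | v ≠ 0}) (maxEig M) := by
  obtain ⟨i, hi⟩ := hM.exists_eigenvalues_eq_maxEig
  refine ⟨⟨_, hM.eigenvectorBasis_ne_zero i, ?_⟩, ?_⟩
  · rw [genRayleigh_one_of_mulVec_eq_smul (hM.eigenvectorBasis_ne_zero i)
      (hM.mulVec_eigenvectorBasis i), hi]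
  · rintro _ ⟨v, hv, rfl⟩
    exact hM.genRayleigh_one_le_maxEig hv

end ExtremeEigenvalues

end IsHermitian

namespace PosDef

variable {d : ℕ} {P : Matrix (Fin d) (Fin d) ℝ}

lemma invSqrt_eq (hP : P.PosDef) : invSqrt P = CFC.sqrt P⁻¹ := by
  have hPinv := hP.inv.posSemidef
  rw [invSqrt, dif_pos hPinv, CFC.sqrt_eq_real_sqrt _ hPinv.nonneg, cfcₙ_eq_cfc, hPinv.1.cfc_eq]
  rfl

lemma transpose_invSqrt (hP : P.PosDef) : (invSqrt P)ᵀ = invSqrt P := by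
  rw [← conjTranspose_eq_transpose_of_trivial, hP.invSqrt_eq]
  exact (CFC.sqrt_nonneg _).posSemidef.isHermitian

lemma invSqrt_mul_invSqrt_mul (hP : P.PosDef) : invSqrt P * (invSqrt P * P) = 1 := by
  rw [← mul_assoc, hP.invSqrt_eq, CFC.sqrt_mul_sqrt_self _ hP.inv.posSemidef.nonneg,
    nonsing_inv_mul _ ((isUnit_iff_isUnit_det _).mp hP.isUnit)]

lemma isUnit_invSqrt (hP : P.PosDef) : IsUnit (invSqrt P) :=
  (isUnit_iff_isUnit_det _).mpr (isUnit_det_of_right_inverse hP.invSqrt_mul_invSqrt_mul)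

lemma invSqrt_mul_mul_invSqrt (hP : P.PosDef) : invSqrt P * P * invSqrt P = 1 :=
  mul_eq_one_comm.mp hP.invSqrt_mul_invSqrt_mul

lemma image_genRayleigh_invSqrt_mul_mul (hP : P.PosDef) (C : Matrix (Fin d) (Fin d) ℝ) :
    genRayleigh (invSqrt P * C * invSqrt P) 1 '' {v | v ≠ 0} =
      genRayleigh C P '' {u | u ≠ 0} := by
  have h := image_genRayleigh_transpose_mul_mul hP.isUnit_invSqrt C P
  rwa [hP.transpose_invSqrt, hP.invSqrt_mul_mul_invSqrt] at h

lemma isHermitian_invSqrt_mul_mul (hP : P.PosDef) {C : Matrix (Fin d) (Fin d) ℝ}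
    (hC : C.IsHermitian) : (invSqrt P * C * invSqrt P).IsHermitian := by
  have h := isHermitian_conjTranspose_mul_mul (invSqrt P) hC
  rwa [conjTranspose_eq_transpose_of_trivial, hP.transpose_invSqrt] at h

lemma isLeast_minEig_invSqrt_mul_mul [Nonempty (Fin d)] (hP : P.PosDef)
    {C : Matrix (Fin d) (Fin d) ℝ} (hC : C.IsHermitian) :
    IsLeast (genRayleigh C P '' {u | u ≠ 0}) (minEig (invSqrt P * C * invSqrt P)) :=
  hP.image_genRayleigh_invSqrt_mul_mul C ▸ (hP.isHermitian_invSqrt_mul_mul hC).isLeast_minEig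

lemma isGreatest_maxEig_invSqrt_mul_mul [Nonempty (Fin d)] (hP : P.PosDef)
    {C : Matrix (Fin d) (Fin d) ℝ} (hC : C.IsHermitian) :
    IsGreatest (genRayleigh C P '' {u | u ≠ 0}) (maxEig (invSqrt P * C * invSqrt P)) :=
  hP.image_genRayleigh_invSqrt_mul_mul C ▸ (hP.isHermitian_invSqrt_mul_mul hC).isGreatest_maxEig

end PosDef

end Matrix

/-- If `A ⪯ B` then both extreme eigenvalues of `(A+X)^{-1/2} A (A+X)^{-1/2}` are at most
the corresponding extreme eigenvalues of `(B+X)^{-1/2} B (B+X)^{-1/2}`. -/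
theorem rayleigh_monotone_in_matrix {d : ℕ} (A B X : Matrix (Fin d) (Fin d) ℝ)
    (hA : A.PosDef) (hB : B.PosDef) (hX : X.PosSemidef)
    (hAB : (B - A).PosSemidef) :
    minEig (invSqrt (A + X) * A * invSqrt (A + X)) ≤
      minEig (invSqrt (B + X) * B * invSqrt (B + X)) ∧
    maxEig (invSqrt (A + X) * A * invSqrt (A + X)) ≤
      maxEig (invSqrt (B + X) * B * invSqrt (B + X)) := by
  rcases isEmpty_or_nonempty (Fin d) with hd | hd
  · have hsub : ∀ M N : Matrix (Fin d) (Fin d) ℝ, M = N := fun M N ↦ by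
      ext i
      exact isEmptyElim i
    exact ⟨(congrArg minEig (hsub _ _)).le, (congrArg maxEig (hsub _ _)).le⟩
  have hmono : ∀ u : Fin d → ℝ, u ≠ 0 →
      genRayleigh A (A + X) u ≤ genRayleigh B (B + X) u :=
    fun u hu ↦ genRayleigh_le_genRayleigh_add hA hAB hX hu
  have hAX := hA.add_posSemidef hX
  have hBX := hB.add_posSemidef hX
  constructor
  · obtain ⟨u, hu, hminB⟩ := (hBX.isLeast_minEig_invSqrt_mul_mul hB.isHermitian).1
    calc minEig (invSqrt (A + X) * A * invSqrt (A + X))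
        ≤ genRayleigh A (A + X) u :=
          (hAX.isLeast_minEig_invSqrt_mul_mul hA.isHermitian).2 ⟨u, hu, rfl⟩
      _ ≤ genRayleigh B (B + X) u := hmono u hu
      _ = minEig (invSqrt (B + X) * B * invSqrt (B + X)) := hminB
  · obtain ⟨u, hu, hmaxA⟩ := (hAX.isGreatest_maxEig_invSqrt_mul_mul hA.isHermitian).1
    calc maxEig (invSqrt (A + X) * A * invSqrt (A + X))
        = genRayleigh A (A + X) u := hmaxA.symm
      _ ≤ genRayleigh B (B + X) u := hmono u hu
      _ ≤ maxEig (invSqrt (B + X) * B * invSqrt (B + X)) :=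
        (hBX.isGreatest_maxEig_invSqrt_mul_mul hB.isHermitian).2 ⟨u, hu, rfl⟩
end

section
/- Let A be a d×d real symmetric positive definite matrix and D a d×d real symmetric positive semidefinite matrix. If there exists ε > 0 such that D ⪯ εA, then A^{-1} D (A+D)^{-1} A (A+D)^{-1} D A^{-1} ⪯ (ε²/(1+ε)²) · A^{-1}. -/
/-! Whitening by `T = A^{1/2}` turns the claim into `Q (1+Q)⁻¹ (1+Q)⁻¹ Q ⪯ (ε/(1+ε))² I` for
`Q = T⁻¹ D T⁻¹`, which satisfies `0 ⪯ Q ⪯ ε I`. The left-hand side is `f(Q)` for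
`f(t) = (t/(1+t))²`, and `f` is increasing on `[0, ∞)`, so `f(Q) ⪯ f(ε) I` because the spectrum of
`Q` lies in `[0, ε]`. -/

open scoped MatrixOrder

lemma div_one_add_le_div_one_add {K : Type*} [Field K] [LinearOrder K] [IsStrictOrderedRing K]
    {s t : K} (hs : 0 ≤ s) (hst : s ≤ t) : s / (1 + s) ≤ t / (1 + t) := by
  rw [div_le_div_iff₀ (by positivity) (by linarith)]
  linarith

namespace Matrix

theorem inv_sandwich_whiten {R n : Type*} [CommRing R] [Fintype n] [DecidableEq n]
    {T Q : Matrix n n R} (hT : IsUnit T.det) :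
    (T * T)⁻¹ * (T * Q * T) * (T * T + T * Q * T)⁻¹ * (T * T) * (T * T + T * Q * T)⁻¹
        * (T * Q * T) * (T * T)⁻¹
      = T⁻¹ * (Q * (1 + Q)⁻¹ * (1 + Q)⁻¹ * Q) * T⁻¹ := by
  rw [show T * T + T * Q * T = T * (1 + Q) * T by noncomm_ring]
  simp only [Matrix.mul_inv_rev, Matrix.mul_assoc, nonsing_inv_mul_cancel_left _ _ hT,
    mul_nonsing_inv_cancel_left _ _ hT]

variable {𝕜 n : Type*} [RCLike 𝕜] [Fintype n] [DecidableEq n]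

lemma inv_one_add_eq_cfc {Q : Matrix n n 𝕜} (hQ : 0 ≤ Q) :
    (1 + Q)⁻¹ = cfc (fun t : ℝ => (1 + t)⁻¹) Q := by
  have hspec : ∀ t ∈ spectrum ℝ Q, 1 + t ≠ 0 := fun t ht => by
    have := spectrum_nonneg_of_nonneg hQ ht
    positivity
  rw [cfc_inv (fun t : ℝ => 1 + t) Q hspec, cfc_const_add 1 (fun t => t) Q, cfc_id' ℝ Q, map_one,
    nonsing_inv_eq_ringInverse]

lemma mul_inv_one_add_mul_inv_one_add_mul_le {Q : Matrix n n 𝕜} (hQ : 0 ≤ Q) {ε : ℝ}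
    (hQε : Q ≤ ε • 1) :
    Q * (1 + Q)⁻¹ * (1 + Q)⁻¹ * Q ≤ (ε / (1 + ε)) ^ 2 • 1 := by
  have hcont (f : ℝ → ℝ) : ContinuousOn f (spectrum ℝ Q) := Q.finite_real_spectrum.continuousOn f
  have hcfc : Q * (1 + Q)⁻¹ * (1 + Q)⁻¹ * Q = cfc (fun t : ℝ => (t / (1 + t)) ^ 2) Q := by
    have hf : (fun t : ℝ => (t / (1 + t)) ^ 2) = fun t => t * (1 + t)⁻¹ * (1 + t)⁻¹ * t := by
      ext t; ring
    rw [hf, cfc_mul _ _ Q (hcont _) (hcont _), cfc_mul _ _ Q (hcont _) (hcont _),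
      cfc_mul _ _ Q (hcont _) (hcont _), cfc_id' ℝ Q, inv_one_add_eq_cfc hQ]
  rw [← Algebra.algebraMap_eq_smul_one] at hQε ⊢
  rw [hcfc]
  refine cfc_le_algebraMap _ _ Q (fun t ht => ?_) (hcont _)
  have ht0 : 0 ≤ t := spectrum_nonneg_of_nonneg hQ ht
  have htε : t ≤ ε := (le_algebraMap_iff_spectrum_le hQ.isSelfAdjoint).mp hQε t ht
  exact pow_le_pow_left₀ (by positivity) (div_one_add_le_div_one_add ht0 htε) 2

end Matrix

open Matrix

theorem quantization_error_upper_multiplicative_general {d : ℕ}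
    (A D : Matrix (Fin d) (Fin d) ℝ) (hA : A.PosDef) (hD : D.PosSemidef)
    (ε : ℝ) (hDA : (ε • A - D).PosSemidef) :
    ((ε ^ 2 / (1 + ε) ^ 2) • A⁻¹
      - A⁻¹ * D * (A + D)⁻¹ * A * (A + D)⁻¹ * D * A⁻¹).PosSemidef := by
  set T := CFC.sqrt A
  have hTT : T * T = A := CFC.sqrt_mul_sqrt_self A hA.posSemidef.nonneg
  have hT : IsUnit T.det := (isUnit_iff_isUnit_det T).mp
    ((CFC.isUnit_sqrt_iff A hA.posSemidef.nonneg).mpr hA.isUnit)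
  have hTinv : IsSelfAdjoint T⁻¹ := (CFC.sqrt_nonneg A).posSemidef.isHermitian.inv
  have hTAT : T⁻¹ * A * T⁻¹ = 1 := by
    rw [← hTT, Matrix.mul_assoc, Matrix.mul_assoc, nonsing_inv_mul_cancel_left _ _ hT,
      mul_nonsing_inv _ hT]
  set Q := T⁻¹ * D * T⁻¹
  have hDQ : D = T * Q * T := by
    simp only [Q, Matrix.mul_assoc, mul_nonsing_inv_cancel_left _ _ hT, nonsing_inv_mul _ hT,
      Matrix.mul_one]
  have hQ : 0 ≤ Q := hTinv.conjugate_nonneg hD.nonneg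
  have hQε : Q ≤ ε • 1 := by
    simpa only [Matrix.mul_smul, Matrix.smul_mul, hTAT] using
      hTinv.conjugate_le_conjugate (le_iff.mpr hDA)
  rw [← le_iff, ← hTT, hDQ, inv_sandwich_whiten hT]
  calc T⁻¹ * (Q * (1 + Q)⁻¹ * (1 + Q)⁻¹ * Q) * T⁻¹
      ≤ T⁻¹ * ((ε / (1 + ε)) ^ 2 • 1) * T⁻¹ :=
        hTinv.conjugate_le_conjugate (mul_inv_one_add_mul_inv_one_add_mul_le hQ hQε)
    _ = (ε ^ 2 / (1 + ε) ^ 2) • (T * T)⁻¹ := by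
        rw [div_pow, Matrix.mul_smul, Matrix.smul_mul, Matrix.mul_one, Matrix.mul_inv_rev]

/-- If `D ⪯ εA` (Loewner order) with `A` positive definite and `D` positive semidefinite, then
`A⁻¹ D (A+D)⁻¹ A (A+D)⁻¹ D A⁻¹ ⪯ (ε²/(1+ε)²) A⁻¹`. -/
theorem quantization_error_upper_multiplicative {d : ℕ}
    (A D : Matrix (Fin d) (Fin d) ℝ) (hA : A.PosDef) (hD : D.PosSemidef)
    (ε : ℝ) (hε : 0 < ε) (hDA : (ε • A - D).PosSemidef) :
    ((ε ^ 2 / (1 + ε) ^ 2) • A⁻¹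
      - A⁻¹ * D * (A + D)⁻¹ * A * (A + D)⁻¹ * D * A⁻¹).PosSemidef :=
  quantization_error_upper_multiplicative_general A D hA hD ε hDA
end

section
/- Let A be a d×d real symmetric positive definite matrix and D a d×d real symmetric positive semidefinite matrix. If there exists ε > 0 such that D ⪯ εI, then A^{-1} D (A+D)^{-1} A (A+D)^{-1} D A^{-1} ⪯ (ε²/(ε + λ_min(A))²) · A^{-1}, where λ_min(A) is the smallest eigenvalue of A. -/
open scoped Classical

/-!
Write `Q = (A + D)⁻¹`, `λ = λ_min(A)` and `c = ε² / (ε + λ)²`. Since `A⁻¹ D Q = Q D A⁻¹ = A⁻¹ - Q`,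
the matrix to be bounded is `Q (D A⁻¹ D) Q`, while `A⁻¹ = Q ((A + D) A⁻¹ (A + D)) Q`; conjugating
by `Q`, it suffices to show `D A⁻¹ D ⪯ c (A + D) A⁻¹ (A + D)`. The difference of the two sides is
`c A + 2c D - (1 - c) D A⁻¹ D`, a nonnegative combination of `A - λ`, `ε - D`, `ε D - D²` and
`D (λ⁻¹ - A⁻¹) D`. The last two are `⪰ 0` because products of commuting positive semidefinite
matrices are positive semidefinite: `ε D - D² = D (ε - D)` and `λ⁻¹ - A⁻¹ = λ⁻¹ A⁻¹ (A - λ)`.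
-/

open scoped MatrixOrder ComplexOrder

namespace Matrix

section Resolvent

variable {n R : Type*} [Fintype n] [DecidableEq n] [CommRing R] {A D : Matrix n n R}

theorem inv_mul_mul_inv_add (hA : IsUnit A.det) (hAD : IsUnit (A + D).det) :
    A⁻¹ * D * (A + D)⁻¹ = A⁻¹ - (A + D)⁻¹ := by
  calc A⁻¹ * D * (A + D)⁻¹ = A⁻¹ * ((A + D) - A) * (A + D)⁻¹ := by rw [add_sub_cancel_left]
    _ = A⁻¹ - (A + D)⁻¹ := by
      rw [mul_sub, sub_mul, mul_assoc, mul_nonsing_inv _ hAD, mul_one, nonsing_inv_mul _ hA,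
        one_mul]

theorem inv_add_mul_mul_inv (hA : IsUnit A.det) (hAD : IsUnit (A + D).det) :
    (A + D)⁻¹ * D * A⁻¹ = A⁻¹ - (A + D)⁻¹ := by
  calc (A + D)⁻¹ * D * A⁻¹ = (A + D)⁻¹ * ((A + D) - A) * A⁻¹ := by rw [add_sub_cancel_left]
    _ = A⁻¹ - (A + D)⁻¹ := by
      rw [mul_sub, sub_mul, nonsing_inv_mul _ hAD, one_mul, mul_assoc, mul_nonsing_inv _ hA,
        mul_one]

end Resolvent

section Loewner

variable {n 𝕜 : Type*} [DecidableEq n] [RCLike 𝕜]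

lemma posDef_of_smul_one_le {A : Matrix n n 𝕜} {l : ℝ} (hl : 0 < l) (hA : l • 1 ≤ A) :
    A.PosDef := by
  simpa using (PosDef.one.smul hl).add_posSemidef hA

variable [Fintype n]

lemma inv_le_inv_smul_one_of_smul_one_le {A : Matrix n n 𝕜} {l : ℝ} (hl : 0 < l)
    (hA : l • 1 ≤ A) : A⁻¹ ≤ l⁻¹ • 1 := by
  have hApos := posDef_of_smul_one_le hl hA
  have hdet := (isUnit_iff_isUnit_det A).mp hApos.isUnit
  have hcommA : Commute A⁻¹ A := (nonsing_inv_mul A hdet).trans (mul_nonsing_inv A hdet).symm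
  have hcomm : Commute A⁻¹ (A - l • 1) :=
    hcommA.sub_right ((Commute.one_right _).smul_right l)
  have h := smul_nonneg (inv_nonneg.2 hl.le)
    (hcomm.mul_nonneg hApos.inv.posSemidef.nonneg (sub_nonneg.2 hA))
  rwa [mul_sub, nonsing_inv_mul A hdet, mul_smul_comm, mul_one, smul_sub, smul_smul,
    inv_mul_cancel₀ hl.ne', one_smul, sub_nonneg] at h

lemma mul_self_le_smul {D : Matrix n n 𝕜} {ε : ℝ} (hD : 0 ≤ D) (hDε : D ≤ ε • 1) :
    D * D ≤ ε • D := by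
  have h := (((Commute.one_right D).smul_right ε).sub_right (Commute.refl D)).mul_nonneg hD
    (sub_nonneg.2 hDε)
  rwa [mul_sub, mul_smul_comm, mul_one, sub_nonneg] at h

theorem mul_inv_mul_le_smul {A D : Matrix n n 𝕜} {l ε : ℝ} (hl : 0 < l) (hε : 0 < ε)
    (hA : l • 1 ≤ A) (hD : 0 ≤ D) (hDε : D ≤ ε • 1) :
    D * A⁻¹ * D ≤ (ε ^ 2 / (ε + l) ^ 2) • ((A + D) * A⁻¹ * (A + D)) := by
  set c := ε ^ 2 / (ε + l) ^ 2
  have hc : 0 ≤ c := by positivity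
  have hc1 : 0 ≤ 1 - c := by
    rw [sub_nonneg, div_le_one (by positivity)]; nlinarith
  have hdet := (isUnit_iff_isUnit_det A).mp (posDef_of_smul_one_le hl hA).isUnit
  have hexpand : (A + D) * A⁻¹ * (A + D) = A + (2 : ℝ) • D + D * A⁻¹ * D := by
    simp only [add_mul, mul_add, mul_assoc, mul_nonsing_inv A hdet, nonsing_inv_mul A hdet,
      one_mul, mul_one]
    module
  -- The coefficients of `D` agree because `(1 - c) ε / l - c l / ε = 2 c`.
  have hcert : c • ((A + D) * A⁻¹ * (A + D)) - D * A⁻¹ * D =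
      c • (A - l • 1) + (c * l / ε) • (ε • 1 - D) + ((1 - c) / l) • (ε • D - D * D)
        + (1 - c) • (D * (l⁻¹ • 1 - A⁻¹) * D) := by
    rw [hexpand, mul_sub, sub_mul, mul_smul_comm, mul_one, smul_mul_assoc]
    match_scalars <;> simp only [c] <;> field_simp <;> ring
  have hAl : 0 ≤ A - l • 1 := sub_nonneg.2 hA
  have hεD : 0 ≤ ε • 1 - D := sub_nonneg.2 hDε
  have hDD : 0 ≤ ε • D - D * D := sub_nonneg.2 (mul_self_le_smul hD hDε)
  have hDPD : 0 ≤ D * (l⁻¹ • 1 - A⁻¹) * D :=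
    hD.isSelfAdjoint.conjugate_nonneg (sub_nonneg.2 (inv_le_inv_smul_one_of_smul_one_le hl hA))
  rw [← sub_nonneg, hcert]
  positivity

end Loewner

end Matrix

open Matrix

lemma minEig_smul_one_le {d : ℕ} {A : Matrix (Fin d) (Fin d) ℝ} (hA : A.IsHermitian) :
    minEig A • 1 ≤ A := by
  rw [← Algebra.algebraMap_eq_smul_one, algebraMap_le_iff_le_spectrum hA,
    hA.spectrum_real_eq_range_eigenvalues]
  rintro _ ⟨i, rfl⟩
  rw [minEig, dif_pos hA]
  exact ciInf_le (Finite.bddBelow_range _) i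

lemma minEig_pos {d : ℕ} [Nonempty (Fin d)] {A : Matrix (Fin d) (Fin d) ℝ} (hA : A.PosDef) :
    0 < minEig A := by
  obtain ⟨i, hi⟩ := exists_eq_ciInf_of_finite (f := hA.isHermitian.eigenvalues)
  rw [minEig, dif_pos hA.isHermitian, ← hi]
  exact hA.eigenvalues_pos i

/-- If `D ⪯ εI` with `A` positive definite and `D` positive semidefinite, then
`A⁻¹ D (A+D)⁻¹ A (A+D)⁻¹ D A⁻¹ ⪯ (ε²/(ε + λ_min(A))²) A⁻¹`. -/
theorem quantization_error_upper_additive {d : ℕ}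
    (A D : Matrix (Fin d) (Fin d) ℝ) (hA : A.PosDef) (hD : D.PosSemidef)
    (ε : ℝ) (hε : 0 < ε) (hDI : (ε • (1 : Matrix (Fin d) (Fin d) ℝ) - D).PosSemidef) :
    ((ε ^ 2 / (ε + minEig A) ^ 2) • A⁻¹
      - A⁻¹ * D * (A + D)⁻¹ * A * (A + D)⁻¹ * D * A⁻¹).PosSemidef := by
  rcases isEmpty_or_nonempty (Fin d) with hd | hd
  · rw [Subsingleton.elim (_ - _) 0]
    exact PosSemidef.zero
  have hAD := hA.add_posSemidef hD
  have hdetA := (isUnit_iff_isUnit_det A).mp hA.isUnit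
  have hdetAD := (isUnit_iff_isUnit_det _).mp hAD.isUnit
  set Q := (A + D)⁻¹
  have hsandwich : A⁻¹ * D * Q * A * Q * D * A⁻¹ = Q * (D * A⁻¹ * D) * Q :=
    calc A⁻¹ * D * Q * A * Q * D * A⁻¹ = (A⁻¹ * D * Q) * A * (Q * D * A⁻¹) := by
          simp only [mul_assoc]
      _ = (Q * D * A⁻¹) * A * (A⁻¹ * D * Q) := by
          rw [inv_mul_mul_inv_add hdetA hdetAD, inv_add_mul_mul_inv hdetA hdetAD]
      _ = Q * (D * (A⁻¹ * A) * A⁻¹ * D) * Q := by simp only [mul_assoc]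
      _ = Q * (D * A⁻¹ * D) * Q := by rw [nonsing_inv_mul _ hdetA, mul_one]
  have hinv : Q * ((A + D) * A⁻¹ * (A + D)) * Q = A⁻¹ := by
    rw [← mul_assoc, ← mul_assoc, nonsing_inv_mul _ hdetAD, one_mul, mul_assoc,
      mul_nonsing_inv _ hdetAD, mul_one]
  rw [← le_iff, hsandwich]
  calc Q * (D * A⁻¹ * D) * Q
      ≤ Q * ((ε ^ 2 / (ε + minEig A) ^ 2) • ((A + D) * A⁻¹ * (A + D))) * Q :=
        hAD.isHermitian.inv.isSelfAdjoint.conjugate_le_conjugate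
          (mul_inv_mul_le_smul (minEig_pos hA) hε (minEig_smul_one_le hA.isHermitian)
            hD.nonneg hDI)
    _ = (ε ^ 2 / (ε + minEig A) ^ 2) • A⁻¹ := by rw [mul_smul_comm, smul_mul_assoc, hinv]
end

section
/- Let A be a d×d real symmetric positive definite matrix and D a d×d real symmetric positive semidefinite matrix. If there exists ε > 0 such that D ⪰ εI, then A^{-1} D (A+D)^{-1} A (A+D)^{-1} D A^{-1} ⪰ (ε²/(ε + λ_max(A))²) · A^{-1}, where λ_max(A) is the largest eigenvalue of A. -/
/-!
Let `S = A^{1/2}`, `Q = S⁻¹ D S⁻¹` and `X = A⁻¹ - (A + D)⁻¹`. The resolvent identity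
`X = A⁻¹ D (A + D)⁻¹ = (A + D)⁻¹ D A⁻¹` turns the left-hand side into `X A X`, and
`S X S = 1 - (1 + Q)⁻¹`, so after conjugating by `S` the claim reads `(1 - (1 + Q)⁻¹)² ⪰ c`
with `c = ε² / (ε + λ)²`, `λ = λ_max(A)`. From `A ⪯ λ` and `D ⪰ ε` one gets `λ Q ⪰ ε`, and on
the spectrum of `Q` the bound is the scalar inequality `ε / (ε + λ) ≤ t / (1 + t)` for `λ t ≥ ε`.
-/

open scoped Classical

open Matrix
open scoped MatrixOrder

lemma Matrix.IsHermitian.le_maxEig_smul_one {d : ℕ} {A : Matrix (Fin d) (Fin d) ℝ}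
    (hA : A.IsHermitian) : A ≤ maxEig A • 1 := by
  rw [← Algebra.algebraMap_eq_smul_one, le_algebraMap_iff_spectrum_le hA,
    hA.spectrum_real_eq_range_eigenvalues]
  rintro _ ⟨i, rfl⟩
  rw [maxEig, dif_pos hA]
  exact le_ciSup (Set.finite_range _).bddAbove i

lemma Matrix.PosSemidef.maxEig_nonneg {d : ℕ} {A : Matrix (Fin d) (Fin d) ℝ}
    (hA : A.PosSemidef) : 0 ≤ maxEig A := by
  rw [maxEig, dif_pos hA.1]
  exact Real.iSup_nonneg hA.eigenvalues_nonneg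

lemma div_add_le_div_one_add {ε l t : ℝ} (hε : 0 < ε) (hl : 0 ≤ l) (h : ε ≤ l * t) :
    ε / (ε + l) ≤ t / (1 + t) := by
  have ht : 0 < t := by nlinarith
  rw [div_le_div_iff₀ (by positivity) (by positivity)]
  nlinarith

namespace Matrix

variable {n : Type*} [Fintype n] [DecidableEq n]

section CommRing

variable {K : Type*} [CommRing K] {S A D : Matrix n n K}

lemma inv_sub_inv_add_mul_mul_inv_sub_inv_add (hA : IsUnit A) (hAD : IsUnit (A + D)) :
    (A⁻¹ - (A + D)⁻¹) * A * (A⁻¹ - (A + D)⁻¹)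
      = A⁻¹ * D * (A + D)⁻¹ * A * (A + D)⁻¹ * D * A⁻¹ := by
  have hunit : IsUnit A ↔ IsUnit (A + D) := iff_of_true hA hAD
  have hleft : A⁻¹ - (A + D)⁻¹ = A⁻¹ * D * (A + D)⁻¹ := by
    rw [inv_sub_inv hunit, add_sub_cancel_left]
  have hright : A⁻¹ - (A + D)⁻¹ = (A + D)⁻¹ * D * A⁻¹ := by
    rw [← neg_sub, inv_sub_inv hunit.symm, sub_add_cancel_left, Matrix.mul_neg, Matrix.neg_mul,
      neg_neg]
  nth_rw 1 [hleft]
  rw [hright]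
  simp only [Matrix.mul_assoc]

lemma inv_mul_mul_inv_eq_one (hS : IsUnit S.det) (hSA : S * S = A) : S⁻¹ * A * S⁻¹ = 1 := by
  simp only [← hSA, nonsing_inv_mul_cancel_left _ _ hS, mul_nonsing_inv _ hS]

lemma mul_inv_mul_eq_one (hS : IsUnit S.det) (hSA : S * S = A) : S * A⁻¹ * S = 1 := by
  simp only [← hSA, mul_inv_rev, Matrix.mul_assoc, nonsing_inv_mul _ hS, Matrix.mul_one,
    mul_nonsing_inv _ hS]

lemma mul_inv_sub_inv_add_mul (hS : IsUnit S.det) (hSA : S * S = A) :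
    S * (A⁻¹ - (A + D)⁻¹) * S = 1 - (1 + S⁻¹ * D * S⁻¹)⁻¹ := by
  have hsum : 1 + S⁻¹ * D * S⁻¹ = S⁻¹ * (A + D) * S⁻¹ := by
    rw [Matrix.mul_add, Matrix.add_mul, inv_mul_mul_inv_eq_one hS hSA]
  rw [hsum, mul_inv_rev, mul_inv_rev, nonsing_inv_nonsing_inv _ hS, Matrix.mul_sub,
    Matrix.sub_mul, mul_inv_mul_eq_one hS hSA, Matrix.mul_assoc]

end CommRing

open scoped ComplexOrder

variable {𝕜 : Type*} [RCLike 𝕜] {S A D X : Matrix n n 𝕜}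

lemma smul_one_le_smul_inv_mul_mul_inv (hS : S.IsHermitian) (hSA : S * S = A)
    (hdet : IsUnit S.det) {ε l : ℝ} (hε : 0 ≤ ε) (hl : 0 ≤ l) (hD : ε • 1 ≤ D)
    (hA : A ≤ l • 1) : ε • 1 ≤ l • (S⁻¹ * D * S⁻¹) := by
  have hSinv : IsSelfAdjoint S⁻¹ := hS.inv
  calc ε • 1 = ε • (S⁻¹ * A * S⁻¹) := by rw [inv_mul_mul_inv_eq_one hdet hSA]
    _ ≤ ε • (S⁻¹ * (l • 1) * S⁻¹) :=
      smul_le_smul_of_nonneg_left (hSinv.conjugate_le_conjugate hA) hε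
    _ = S⁻¹ * (l • (ε • 1)) * S⁻¹ := by simp [smul_smul, mul_comm]
    _ ≤ S⁻¹ * (l • D) * S⁻¹ := hSinv.conjugate_le_conjugate (smul_le_smul_of_nonneg_left hD hl)
    _ = l • (S⁻¹ * D * S⁻¹) := by simp

lemma smul_inv_le_mul_mul_of_smul_one_le_sq (hS : S.IsHermitian) (hSA : S * S = A)
    (hdet : IsUnit S.det) {c : ℝ} (h : c • 1 ≤ (S * X * S) ^ 2) : c • A⁻¹ ≤ X * A * X := by
  have hSinv : IsSelfAdjoint S⁻¹ := hS.inv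
  convert hSinv.conjugate_le_conjugate h using 1
  · rw [← hSA, mul_inv_rev]
    simp
  · rw [← hSA, sq]
    simp only [Matrix.mul_assoc, nonsing_inv_mul_cancel_left _ _ hdet, mul_nonsing_inv _ hdet,
      Matrix.mul_one]

lemma IsHermitian.smul_one_le_one_sub_inv_one_add_sq {Q : Matrix n n 𝕜} (hQ : Q.IsHermitian)
    {ε l : ℝ} (hε : 0 < ε) (hl : 0 ≤ l) (h : ε • 1 ≤ l • Q) :
    (ε / (ε + l)) ^ 2 • 1 ≤ (1 - (1 + Q)⁻¹) ^ 2 := by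
  have hfin := Q.finite_real_spectrum
  have hspec : ∀ t ∈ spectrum ℝ Q, ε ≤ l * t := by
    rw [← algebraMap_le_cfc_iff (fun t => l * t) ε Q (ha := hQ.isSelfAdjoint),
      cfc_const_mul_id l Q, Algebra.algebraMap_eq_smul_one]
    exact h
  have hne : ∀ t ∈ spectrum ℝ Q, 1 + t ≠ 0 := fun t ht => by
    nlinarith [hspec t ht]
  -- the spectrum of a matrix is finite, so every function is continuous on it
  have hcfc : (1 - (1 + Q)⁻¹) ^ 2 = cfc (fun t : ℝ => (1 - (1 + t)⁻¹) ^ 2) Q := by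
    rw [cfc_pow _ _ _ (hfin.continuousOn _),
      cfc_sub _ _ _ (hfin.continuousOn _) (hfin.continuousOn _),
      cfc_inv _ _ hne (hfin.continuousOn _), cfc_add .., cfc_const_one ℝ Q, cfc_id' ℝ Q,
      nonsing_inv_eq_ringInverse]
  rw [hcfc, ← Algebra.algebraMap_eq_smul_one]
  refine algebraMap_le_cfc _ _ Q (fun t ht => ?_) (hfin.continuousOn _)
  have hsub : 1 - (1 + t)⁻¹ = t / (1 + t) := by
    field_simp [hne t ht]
    ring
  rw [hsub]
  exact pow_le_pow_left₀ (by positivity) (div_add_le_div_one_add hε hl (hspec t ht)) 2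

lemma PosDef.exists_isHermitian_mul_self_eq (hA : A.PosDef) :
    ∃ S : Matrix n n 𝕜, S.IsHermitian ∧ S * S = A ∧ IsUnit S.det := by
  have hA0 : 0 ≤ A := nonneg_iff_posSemidef.mpr hA.posSemidef
  exact ⟨CFC.sqrt A, (CFC.sqrt_nonneg A).isSelfAdjoint, CFC.sqrt_mul_sqrt_self A,
    (isUnit_iff_isUnit_det _).mp ((CFC.isUnit_sqrt_iff A).mpr hA.isUnit)⟩

end Matrix

/-- If `D ⪰ εI` with `A` positive definite and `D` positive semidefinite, then
`A⁻¹ D (A+D)⁻¹ A (A+D)⁻¹ D A⁻¹ ⪰ (ε²/(ε + λ_max(A))²) A⁻¹`. -/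
theorem quantization_error_lower_additive {d : ℕ}
    (A D : Matrix (Fin d) (Fin d) ℝ) (hA : A.PosDef) (hD : D.PosSemidef)
    (ε : ℝ) (hε : 0 < ε) (hID : (D - ε • (1 : Matrix (Fin d) (Fin d) ℝ)).PosSemidef) :
    (A⁻¹ * D * (A + D)⁻¹ * A * (A + D)⁻¹ * D * A⁻¹
      - (ε ^ 2 / (ε + maxEig A) ^ 2) • A⁻¹).PosSemidef := by
  obtain ⟨S, hS, hSA, hdet⟩ := hA.exists_isHermitian_mul_self_eq
  have hmax := hA.posSemidef.maxEig_nonneg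
  have hQ : (S⁻¹ * D * S⁻¹).IsHermitian := by
    have := isHermitian_conjTranspose_mul_mul S⁻¹ hD.1
    rwa [hS.inv.eq] at this
  have hεQ : ε • 1 ≤ maxEig A • (S⁻¹ * D * S⁻¹) :=
    smul_one_le_smul_inv_mul_mul_inv hS hSA hdet hε.le hmax hID hA.1.le_maxEig_smul_one
  have hkey := hQ.smul_one_le_one_sub_inv_one_add_sq hε hmax hεQ
  rw [← mul_inv_sub_inv_add_mul hdet hSA, div_pow] at hkey
  rw [← inv_sub_inv_add_mul_mul_inv_sub_inv_add hA.isUnit (hA.add_posSemidef hD).isUnit]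
  exact smul_inv_le_mul_mul_of_smul_one_le_sq hS hSA hdet hkey
end

section
/- Define f(x) = Σ_{t=0}^{N−1} (1 − (1−x)^{N−t−1})·(1 − (1−x)^t) for 0 < x < 1. For every integer N ≥ 500 and every real x with 1/N ≤ x < 1, one has f(x) ≥ N/10. -/
/-!
Each factor `1 - (1 - x)^k` of `varSum N x` is nonnegative and nondecreasing in `x ∈ [0, 1]`, so
it suffices to bound `varSum N (1/N)`. Expanding the product and reflecting the index turns the
sum into geometric sums; with `q = 1 - 1/N` this gives `varSum N (1/N) = N (q^(N-1) + 2 q^N - 1)`.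
Since `q^(N-1) = ((1 + 1/(N-1))^(N-1))⁻¹ ≥ e⁻¹`, the bracket is at least `(1 + 2q)/e - 1`,
which exceeds `1/10` once `q ≥ 499/500`.
-/

/-- The bilinear sum arising from the variance term of iterate-averaged SGD:
`f(x) = Σ_{t=0}^{N−1} (1 − (1−x)^{N−t−1})(1 − (1−x)^t)`. -/
noncomputable def varSum (N : ℕ) (x : ℝ) : ℝ :=
  ∑ t ∈ Finset.range N, (1 - (1 - x) ^ (N - t - 1)) * (1 - (1 - x) ^ t)

open Finset Real

lemma one_sub_pow_one_sub_nonneg {x : ℝ} (hx0 : 0 ≤ x) (hx1 : x ≤ 1) (k : ℕ) :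
    0 ≤ 1 - (1 - x) ^ k :=
  sub_nonneg.2 (pow_le_one₀ (by linarith) (by linarith))

lemma one_sub_pow_one_sub_le {x y : ℝ} (hxy : x ≤ y) (hy1 : y ≤ 1) (k : ℕ) :
    1 - (1 - x) ^ k ≤ 1 - (1 - y) ^ k :=
  sub_le_sub_left (pow_le_pow_left₀ (by linarith) (by linarith) k) 1

lemma varSum_mono {x y : ℝ} (hx0 : 0 ≤ x) (hxy : x ≤ y) (hy1 : y ≤ 1) (N : ℕ) :
    varSum N x ≤ varSum N y :=
  sum_le_sum fun _ _ ↦ mul_le_mul (one_sub_pow_one_sub_le hxy hy1 _)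
    (one_sub_pow_one_sub_le hxy hy1 _) (one_sub_pow_one_sub_nonneg hx0 (hxy.trans hy1) _)
    (one_sub_pow_one_sub_nonneg (hx0.trans hxy) hy1 _)

lemma varSum_eq (N : ℕ) (x : ℝ) :
    varSum N x = N * (1 + (1 - x) ^ (N - 1)) - 2 * ∑ t ∈ range N, (1 - x) ^ t := by
  have expand : ∀ t ∈ range N, (1 - (1 - x) ^ (N - t - 1)) * (1 - (1 - x) ^ t)
      = 1 + (1 - x) ^ (N - 1) - (1 - x) ^ (N - 1 - t) - (1 - x) ^ t := by
    intro t ht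
    have hpow : (1 - x) ^ (N - 1 - t) * (1 - x) ^ t = (1 - x) ^ (N - 1) := by
      rw [← pow_add, Nat.sub_add_cancel (by grind)]
    rw [Nat.sub_right_comm]
    linear_combination hpow
  rw [varSum, sum_congr rfl expand]
  simp only [sum_sub_distrib, sum_const, card_range, nsmul_eq_mul,
    sum_range_reflect (fun t ↦ (1 - x) ^ t) N]
  ring

lemma varSum_one_div {N : ℕ} (hN : N ≠ 0) :
    varSum N (1 / N) = N * ((1 - 1 / N) ^ (N - 1) + 2 * (1 - 1 / N) ^ N - 1) := by
  have hgeom : ∑ t ∈ range N, (1 - 1 / (N : ℝ)) ^ t = N * (1 - (1 - 1 / N) ^ N) := by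
    have h := geom_sum_mul_neg (1 - 1 / (N : ℝ)) N
    rw [sub_sub_cancel] at h
    field_simp at h ⊢
    exact h
  rw [varSum_eq, hgeom]
  ring

lemma exp_neg_one_le_one_sub_one_div_pow {N : ℕ} (hN : N ≠ 0) :
    exp (-1) ≤ (1 - 1 / (N : ℝ)) ^ (N - 1) := by
  obtain ⟨n, rfl⟩ := Nat.exists_eq_succ_of_ne_zero hN
  have hinv : (1 - 1 / ((n + 1 : ℕ) : ℝ)) ^ n = ((1 + (n : ℝ)⁻¹) ^ n)⁻¹ := by
    rcases Nat.eq_zero_or_pos n with rfl | hn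
    · simp
    · rw [← inv_pow]
      congr 1
      field_simp
      push_cast
      ring
  rw [Nat.succ_sub_one, hinv, exp_neg]
  exact inv_anti₀ (by positivity) one_add_inv_pow_le_exp

theorem varSum_lower_large_x_general (N : ℕ) (hN : 500 ≤ N) (x : ℝ)
    (hx1 : x < 1) (hx : 1 / (N : ℝ) ≤ x) :
    (N : ℝ) / 10 ≤ varSum N x := by
  have hN0 : N ≠ 0 := by omega
  set q : ℝ := 1 - 1 / N with hq_def
  have hq : 499 / 500 ≤ q := by
    have : 1 / (N : ℝ) ≤ 1 / 500 := one_div_le_one_div_of_le (by norm_num) (by exact_mod_cast hN)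
    linarith
  have hqN : q ^ N = q ^ (N - 1) * q := by rw [← pow_succ, Nat.sub_add_cancel (by omega)]
  have hbracket : 1 / 10 ≤ q ^ (N - 1) + 2 * q ^ N - 1 := by
    have hexp := exp_neg_one_le_one_sub_one_div_pow hN0
    have : exp (-1) * (1 + 2 * (499 / 500)) ≤ q ^ (N - 1) * (1 + 2 * q) :=
      mul_le_mul hexp (by linarith) (by norm_num) (by positivity)
    linarith [exp_neg_one_gt_d9]
  calc (N : ℝ) / 10 ≤ N * (q ^ (N - 1) + 2 * q ^ N - 1) := by
        rw [div_eq_mul_one_div]; gcongr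
    _ = varSum N (1 / N) := (varSum_one_div hN0).symm
    _ ≤ varSum N x := varSum_mono (by positivity) hx hx1.le N

/-- For `N ≥ 500` and `1/N ≤ x < 1`: `f(x) ≥ N/10`. -/
theorem varSum_lower_large_x (N : ℕ) (hN : 500 ≤ N) (x : ℝ)
    (hx0 : 0 < x) (hx1 : x < 1) (hx : 1 / (N : ℝ) ≤ x) :
    (N : ℝ) / 10 ≤ varSum N x :=
  varSum_lower_large_x_general N hN x hx1 hx
end

section
/- Define f(x) = Σ_{t=0}^{N−1} (1 − (1−x)^{N−t−1})·(1 − (1−x)^t) for 0 < x < 1. For every integer N ≥ 500 and every real x with 0 < x < 1/N, one has f(x) ≥ (2/25)·N³·x². -/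
private lemma pow_ub (x : ℝ) (hx0 : 0 ≤ x) (hx1 : x ≤ 1) :
    ∀ m : ℕ, (1 - x) ^ m ≤ 1 - (m : ℝ) * x + (m : ℝ) * ((m : ℝ) - 1) / 2 * x ^ 2 := by
  intro m
  induction m with
  | zero => norm_num
  | succ m ih =>
    have h1x : (0:ℝ) ≤ 1 - x := by linarith
    have h := mul_le_mul_of_nonneg_right ih h1x
    have hmm : (0:ℝ) ≤ (m : ℝ) * ((m : ℝ) - 1) := by
      rcases Nat.eq_zero_or_pos m with hm0 | hm1
      · simp [hm0]
      · have : (1:ℝ) ≤ (m:ℝ) := by exact_mod_cast hm1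
        nlinarith
    have hx3 : (0:ℝ) ≤ x ^ 3 := by positivity
    push_cast
    have e : (1 - x) ^ (m + 1) = (1 - x) ^ m * (1 - x) := by ring
    rw [e]
    nlinarith [mul_nonneg hmm hx3]

private lemma sum_id (n : ℕ) :
    ∑ i ∈ Finset.range n, (i : ℝ) = n * (n - 1) / 2 := by
  induction n with
  | zero => simp
  | succ n ih => rw [Finset.sum_range_succ, ih]; push_cast; ring

private lemma sum_sq (n : ℕ) :
    ∑ i ∈ Finset.range n, (i : ℝ) ^ 2 = n * (n - 1) * (2 * n - 1) / 6 := by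
  induction n with
  | zero => simp
  | succ n ih => rw [Finset.sum_range_succ, ih]; push_cast; ring

set_option maxHeartbeats 2000000 in
/-- For `N ≥ 500` and `0 < x < 1/N`: `f(x) ≥ (2/25)·N³·x²`. -/
theorem varSum_lower_small_x (N : ℕ) (hN : 500 ≤ N) (x : ℝ)
    (hx0 : 0 < x) (hx : x < 1 / (N : ℝ)) :
    (2 / 25) * (N : ℝ) ^ 3 * x ^ 2 ≤ varSum N x := by
  have hNpos : (0:ℝ) < N := by positivity
  have hN1 : (1:ℝ) ≤ (N:ℝ) := by exact_mod_cast Nat.one_le_of_lt (by omega : 1 < N)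
  have hNx : (N : ℝ) * x < 1 := by
    rw [div_eq_inv_mul, mul_one] at hx
    calc (N:ℝ) * x < (N:ℝ) * ((N:ℝ))⁻¹ := mul_lt_mul_of_pos_left hx hNpos
      _ = 1 := mul_inv_cancel₀ (ne_of_gt hNpos)
  have hx1 : x ≤ 1 := by nlinarith [mul_nonneg hx0.le (sub_nonneg.mpr hN1)]
  have h1x : (0:ℝ) ≤ 1 - x := by linarith
  -- termwise lower bound
  have hterm : ∀ t ∈ Finset.range N,
      ((N:ℝ) - 1 - t) * t * x ^ 2 * (1 - ((N:ℝ) - 1) * x / 2) ≤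
        (1 - (1 - x) ^ (N - t - 1)) * (1 - (1 - x) ^ t) := by
    intro t ht
    have htN : t < N := Finset.mem_range.mp ht
    set a : ℕ := N - t - 1 with hadef
    have haN : (a : ℝ) = (N:ℝ) - 1 - t := by
      have : a = N - (t + 1) := by omega
      rw [this, Nat.cast_sub (by omega)]
      push_cast; ring
    have ha0 : (0:ℝ) ≤ (a:ℝ) := Nat.cast_nonneg a
    have ht0 : (0:ℝ) ≤ (t:ℝ) := Nat.cast_nonneg t
    have hax : (a:ℝ) * x ≤ 1 := by
      have : (a:ℝ) ≤ (N:ℝ) := by rw [haN]; linarith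
      nlinarith
    have htx : (t:ℝ) * x ≤ 1 := by
      have : (t:ℝ) ≤ (N:ℝ) := by exact_mod_cast Nat.le_of_lt htN
      nlinarith
    have h1 := pow_ub x hx0.le hx1 a
    have h2 := pow_ub x hx0.le hx1 t
    have hA0 : (0:ℝ) ≤ (1 - x) ^ a := pow_nonneg h1x a
    have hB0 : (0:ℝ) ≤ (1 - x) ^ t := pow_nonneg h1x t
    have hM1 : (a:ℝ) * x * (1 - (a:ℝ) * x / 2) ≤ 1 - (1 - x) ^ a := by
      nlinarith [mul_nonneg ha0 (mul_nonneg hx0.le (mul_nonneg hx0.le hx0.le))]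
    have hM2 : (t:ℝ) * x * (1 - (t:ℝ) * x / 2) ≤ 1 - (1 - x) ^ t := by
      nlinarith [mul_nonneg ht0 (mul_nonneg hx0.le (mul_nonneg hx0.le hx0.le))]
    have hM1nn : (0:ℝ) ≤ (a:ℝ) * x * (1 - (a:ℝ) * x / 2) :=
      mul_nonneg (mul_nonneg ha0 hx0.le) (by linarith)
    have hM2nn : (0:ℝ) ≤ (t:ℝ) * x * (1 - (t:ℝ) * x / 2) :=
      mul_nonneg (mul_nonneg ht0 hx0.le) (by linarith)
    have hAnn : (0:ℝ) ≤ 1 - (1 - x) ^ a := le_trans hM1nn hM1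
    have hprod : (a:ℝ) * x * (1 - (a:ℝ) * x / 2) * ((t:ℝ) * x * (1 - (t:ℝ) * x / 2)) ≤
        (1 - (1 - x) ^ a) * (1 - (1 - x) ^ t) :=
      mul_le_mul hM1 hM2 hM2nn hAnn
    calc ((N:ℝ) - 1 - t) * t * x ^ 2 * (1 - ((N:ℝ) - 1) * x / 2)
        = (a:ℝ) * t * x ^ 2 * (1 - ((a:ℝ) + t) * x / 2) := by rw [haN]; ring
      _ ≤ (a:ℝ) * x * (1 - (a:ℝ) * x / 2) * ((t:ℝ) * x * (1 - (t:ℝ) * x / 2)) := by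
          nlinarith [sq_nonneg ((a:ℝ) * t * x ^ 2)]
      _ ≤ _ := hprod
  have hsum := Finset.sum_le_sum hterm
  rw [varSum]
  -- evaluate the lower-bound sum
  have hkey : ∑ t ∈ Finset.range N,
      ((N:ℝ) - 1 - t) * t * x ^ 2 * (1 - ((N:ℝ) - 1) * x / 2)
      = (N:ℝ) * ((N:ℝ) - 1) * ((N:ℝ) - 2) / 6 * (x ^ 2 * (1 - ((N:ℝ) - 1) * x / 2)) := by
    have hcong : ∀ t ∈ Finset.range N,
        ((N:ℝ) - 1 - t) * t * x ^ 2 * (1 - ((N:ℝ) - 1) * x / 2)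
        = (((N:ℝ) - 1) * t - (t:ℝ)^2) * (x ^ 2 * (1 - ((N:ℝ) - 1) * x / 2)) := by
      intro t _; ring
    rw [Finset.sum_congr rfl hcong, ← Finset.sum_mul]
    have : ∑ t ∈ Finset.range N, (((N:ℝ) - 1) * t - (t:ℝ)^2)
        = (N:ℝ) * ((N:ℝ) - 1) * ((N:ℝ) - 2) / 6 := by
      rw [Finset.sum_sub_distrib, ← Finset.mul_sum, sum_id, sum_sq]
      ring
    rw [this]
  rw [hkey] at hsum
  refine le_trans ?_ hsum
  have hN500 : (500:ℝ) ≤ (N:ℝ) := by exact_mod_cast hN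
  have hc : (1:ℝ)/2 ≤ 1 - ((N:ℝ) - 1) * x / 2 := by nlinarith
  have hK : (0:ℝ) ≤ (N:ℝ) * ((N:ℝ) - 1) * ((N:ℝ) - 2) / 6 := by
    have := mul_nonneg (mul_nonneg hNpos.le (show (0:ℝ) ≤ (N:ℝ) - 1 by linarith))
      (show (0:ℝ) ≤ (N:ℝ) - 2 by linarith)
    linarith
  have hcube : (2/25) * (N:ℝ)^3 ≤ (N:ℝ) * ((N:ℝ) - 1) * ((N:ℝ) - 2) / 6 * (1/2) := by
    nlinarith [mul_nonneg (mul_nonneg hNpos.le hNpos.le) (show (0:ℝ) ≤ (N:ℝ) - 500 by linarith),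
      sq_nonneg (N:ℝ), hNpos.le]
  have hx2 : (0:ℝ) ≤ x^2 := sq_nonneg x
  calc (2/25) * (N:ℝ)^3 * x^2
      ≤ ((N:ℝ) * ((N:ℝ) - 1) * ((N:ℝ) - 2) / 6 * (1/2)) * x^2 :=
        mul_le_mul_of_nonneg_right hcube hx2
    _ = (N:ℝ) * ((N:ℝ) - 1) * ((N:ℝ) - 2) / 6 * (x^2 * (1/2)) := by ring
    _ ≤ (N:ℝ) * ((N:ℝ) - 1) * ((N:ℝ) - 2) / 6 * (x ^ 2 * (1 - ((N:ℝ) - 1) * x / 2)) :=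
        mul_le_mul_of_nonneg_left (mul_le_mul_of_nonneg_left hc hx2) hK
end

section
/- Let H be a d×d real symmetric positive semidefinite matrix, and let γ, α, σ² > 0 satisfy γ·α·tr(H) < 1. Let 𝒫 be a linear map on d×d real symmetric matrices that is monotone with respect to the Loewner order (A ⪯ B implies 𝒫(A) ⪯ 𝒫(B)) and satisfies 𝒫(I) ⪯ I − 2γH + γ²·α·tr(H)·H. Suppose C₀ = 0 and, for each t ≥ 1, C_t is a symmetric matrix with C_t ⪯ 𝒫(C_{t−1}) + γ²σ²H. Then for every t ≥ 0, C_t ⪯ (γσ²/(1 − γ·α·tr(H)))·I. -/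
/-!
With `c = γσ²/(1 − γα tr H)`, the matrix `c • 1` is a supersolution of the recursion
`A ↦ P A + γ²σ² H`, which is monotone on symmetric matrices; by induction it therefore
dominates every sequence that starts at `0` and stays below the recursion.
-/

open scoped MatrixOrder

theorem MonotoneOn.seq_le_of_map_le {α : Type*} [Preorder α] {s : Set α} {f : α → α}
    (hf : MonotoneOn f s) {b : α} (hb : b ∈ s) (hfb : f b ≤ b) {x : ℕ → α}
    (hxs : ∀ t, x t ∈ s) (h0 : x 0 ≤ b) (hx : ∀ t, x (t + 1) ≤ f (x t)) :
    ∀ t, x t ≤ b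
  | 0 => h0
  | t + 1 => (hx t).trans <| (hf (hxs t) hb (seq_le_of_map_le hf hb hfb hxs h0 hx t)).trans hfb

namespace Matrix

variable {n : Type*} [Fintype n] [DecidableEq n]

/-- Under `c (1 - γκ) = γσ²`, the contraction `c (2γ - γ²κ) H` that `P` gains on `c • 1`
exceeds the noise `γ²σ² H` by `cγ H ≥ 0`. -/
theorem linearMap_smul_one_add_le_smul_one {P : Matrix n n ℝ →ₗ[ℝ] Matrix n n ℝ}
    {H : Matrix n n ℝ} (hH : 0 ≤ H) {γ κ σ2 c : ℝ} (hγ : 0 ≤ γ) (hc : 0 ≤ c)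
    (hP1 : P 1 ≤ 1 - (2 * γ) • H + (γ ^ 2 * κ) • H) (hcσ : c * (1 - γ * κ) = γ * σ2) :
    P (c • 1) + (γ ^ 2 * σ2) • H ≤ c • 1 :=
  calc P (c • 1) + (γ ^ 2 * σ2) • H
      ≤ c • (1 - (2 * γ) • H + (γ ^ 2 * κ) • H) + (γ ^ 2 * σ2) • H := by
        rw [map_smul]
        exact add_le_add_left (smul_le_smul_of_nonneg_left hP1 hc) _
    _ = c • 1 - (c * γ) • H := by
        rw [show γ ^ 2 * σ2 = γ * (c * (1 - γ * κ)) by rw [hcσ]; ring]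
        module
    _ ≤ c • 1 := sub_le_self _ (smul_nonneg (mul_nonneg hc hγ) hH)

end Matrix

theorem crude_variance_bound_general {d : ℕ}
    (H : Matrix (Fin d) (Fin d) ℝ) (hH : H.PosSemidef)
    (γ α σ2 : ℝ) (hγ : 0 < γ) (hσ : 0 < σ2)
    (hstep : γ * α * H.trace < 1)
    (P : Matrix (Fin d) (Fin d) ℝ →ₗ[ℝ] Matrix (Fin d) (Fin d) ℝ)
    (hmono : ∀ A B : Matrix (Fin d) (Fin d) ℝ,
      A.IsHermitian → B.IsHermitian → (B - A).PosSemidef → (P B - P A).PosSemidef)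
    (hPI : (((1 : Matrix (Fin d) (Fin d) ℝ) - (2 * γ) • H + (γ ^ 2 * α * H.trace) • H)
      - P 1).PosSemidef)
    (C : ℕ → Matrix (Fin d) (Fin d) ℝ)
    (hC0 : C 0 = 0)
    (hCsymm : ∀ t, (C t).IsHermitian)
    (hCrec : ∀ t, ((P (C t) + (γ ^ 2 * σ2) • H) - C (t + 1)).PosSemidef) :
    ∀ t, ((γ * σ2 / (1 - γ * α * H.trace)) • (1 : Matrix (Fin d) (Fin d) ℝ)
      - C t).PosSemidef := by
  set c := γ * σ2 / (1 - γ * α * H.trace)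
  have hden : 0 < 1 - γ * α * H.trace := by linarith
  have hc : 0 ≤ c := by positivity
  have hcσ : c * (1 - γ * (α * H.trace)) = γ * σ2 := by
    rw [← mul_assoc]; exact div_mul_cancel₀ _ hden.ne'
  have hP1 : P 1 ≤ 1 - (2 * γ) • H + (γ ^ 2 * (α * H.trace)) • H := by
    rw [← mul_assoc]; exact hPI
  have hrec_mono : MonotoneOn (fun A => P A + (γ ^ 2 * σ2) • H) {A | A.IsHermitian} :=
    MonotoneOn.add_const (fun A hA B hB hAB => hmono A B hA hB hAB) _
  refine hrec_mono.seq_le_of_map_le (Matrix.PosSemidef.one.smul hc).isHermitian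
    (Matrix.linearMap_smul_one_add_le_smul_one hH.nonneg hγ.le hc hP1 hcσ) hCsymm ?_ hCrec
  rw [hC0]
  exact (Matrix.PosSemidef.one.smul hc).nonneg

/-- Crude variance bound for the abstract SGD covariance recursion: if the monotone linear
transition map `P` satisfies `P(I) ⪯ I − 2γH + γ²·α·tr(H)·H` and
`C_{t+1} ⪯ P(C_t) + γ²σ²H` with `C₀ = 0`, then `C_t ⪯ (γσ²/(1 − γα tr H))·I` for all `t`. -/
theorem crude_variance_bound {d : ℕ}
    (H : Matrix (Fin d) (Fin d) ℝ) (hH : H.PosSemidef)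
    (γ α σ2 : ℝ) (hγ : 0 < γ) (hα : 0 < α) (hσ : 0 < σ2)
    (hstep : γ * α * H.trace < 1)
    (P : Matrix (Fin d) (Fin d) ℝ →ₗ[ℝ] Matrix (Fin d) (Fin d) ℝ)
    (hmono : ∀ A B : Matrix (Fin d) (Fin d) ℝ,
      A.IsHermitian → B.IsHermitian → (B - A).PosSemidef → (P B - P A).PosSemidef)
    (hPI : (((1 : Matrix (Fin d) (Fin d) ℝ) - (2 * γ) • H + (γ ^ 2 * α * H.trace) • H)
      - P 1).PosSemidef)
    (C : ℕ → Matrix (Fin d) (Fin d) ℝ)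
    (hC0 : C 0 = 0)
    (hCsymm : ∀ t, (C t).IsHermitian)
    (hCrec : ∀ t, ((P (C t) + (γ ^ 2 * σ2) • H) - C (t + 1)).PosSemidef) :
    ∀ t, ((γ * σ2 / (1 - γ * α * H.trace)) • (1 : Matrix (Fin d) (Fin d) ℝ)
      - C t).PosSemidef :=
  crude_variance_bound_general H hH γ α σ2 hγ hσ hstep P hmono hPI C hC0 hCsymm hCrec
end

section
/- Let H be a d×d real symmetric matrix with 0 ⪯ γH ⪯ I for some γ > 0, and let σ² ≥ 0. Suppose C₀ = 0 and, for each t ≥ 1, C_t is a symmetric matrix with C_t ⪰ (I − γH)·C_{t−1}·(I − γH) + γ²σ²H. Then for every t ≥ 0, C_t ⪰ (γσ²/2)·(I − (I − γH)^{2t}). -/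
/-!
With `B = 1 - γ • H`, the gap `D t = C t - (γσ²/2) • (1 - B ^ (2t))` satisfies
`D (t+1) - B * D t * B = (slack of the recursion) + (γ³σ²/2) • H²`, because
`(γσ²/2) • (1 - B²) = γ²σ² • H - (γ³σ²/2) • H²`. Both terms are positive semidefinite and
conjugation by the Hermitian `B` preserves positive semidefiniteness, so `D t ⪰ 0` follows by
induction from `D 0 = 0`.
-/

open Matrix

theorem variance_gap_step_eq {A : Type*} [Ring A] [Algebra ℝ A] (H C C' : A) (γ σ2 : ℝ)
    (t : ℕ) :
    let B := 1 - γ • H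
    C' - (γ * σ2 / 2) • (1 - B ^ (2 * (t + 1)))
        - B * (C - (γ * σ2 / 2) • (1 - B ^ (2 * t))) * B
      = (C' - (B * C * B + (γ ^ 2 * σ2) • H)) + (γ ^ 3 * σ2 / 2) • (H * H) := by
  intro B
  have hpow : B ^ (2 * (t + 1)) = B * B ^ (2 * t) * B := by
    rw [show 2 * (t + 1) = 1 + 2 * t + 1 by ring, pow_add, pow_add, pow_one]
  have hsq : B * B = 1 - (2 * γ) • H + γ ^ 2 • (H * H) := by
    simp only [B, mul_sub, sub_mul, one_mul, mul_one, smul_mul_smul_comm]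
    module
  rw [hpow]
  simp only [mul_sub, sub_mul, mul_smul_comm, smul_mul_assoc, mul_one, hsq]
  module

variable {n : Type*} [Fintype n]

theorem Matrix.IsHermitian.posSemidef_mul_self {H : Matrix n n ℝ} (hH : H.IsHermitian) :
    (H * H).PosSemidef := by
  simpa only [hH.eq] using posSemidef_conjTranspose_mul_self H

theorem Matrix.PosSemidef.of_conj_recursion {B : Matrix n n ℝ} (hB : B.IsHermitian)
    {D : ℕ → Matrix n n ℝ} (h0 : (D 0).PosSemidef)
    (hstep : ∀ t, (D (t + 1) - B * D t * B).PosSemidef) (t : ℕ) : (D t).PosSemidef := by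
  induction t with
  | zero => exact h0
  | succ t ih =>
    have hconj : (B * D t * B).PosSemidef := by
      simpa only [hB.eq] using ih.mul_mul_conjTranspose_same B
    simpa using (hstep t).add hconj

theorem variance_lower_bound_general {d : ℕ}
    (H : Matrix (Fin d) (Fin d) ℝ) (hH : H.IsHermitian)
    (γ : ℝ) (hγ : 0 < γ)
    (σ2 : ℝ) (hσ : 0 ≤ σ2)
    (C : ℕ → Matrix (Fin d) (Fin d) ℝ)
    (hC0 : C 0 = 0)
    (hCrec : ∀ t, (C (t + 1)
      - (((1 : Matrix (Fin d) (Fin d) ℝ) - γ • H) * C t *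
          ((1 : Matrix (Fin d) (Fin d) ℝ) - γ • H) + (γ ^ 2 * σ2) • H)).PosSemidef) :
    ∀ t, (C t - (γ * σ2 / 2) • ((1 : Matrix (Fin d) (Fin d) ℝ)
        - ((1 : Matrix (Fin d) (Fin d) ℝ) - γ • H) ^ (2 * t))).PosSemidef := by
  have hB : ((1 : Matrix (Fin d) (Fin d) ℝ) - γ • H).IsHermitian :=
    isHermitian_one.sub (hH.smul (.all γ))
  refine PosSemidef.of_conj_recursion hB (by simpa [hC0] using PosSemidef.zero) fun t => ?_
  rw [variance_gap_step_eq]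
  exact (hCrec t).add (hH.posSemidef_mul_self.smul (by positivity))

/-- Variance lower bound: if `0 ⪯ γH ⪯ I`, `C₀ = 0` and
`C_{t+1} ⪰ (I−γH) C_t (I−γH) + γ²σ²H`, then `C_t ⪰ (γσ²/2)(I − (I−γH)^{2t})`. -/
theorem variance_lower_bound {d : ℕ}
    (H : Matrix (Fin d) (Fin d) ℝ) (hH : H.IsHermitian)
    (γ : ℝ) (hγ : 0 < γ)
    (hpos : (γ • H).PosSemidef)
    (hle : ((1 : Matrix (Fin d) (Fin d) ℝ) - γ • H).PosSemidef)
    (σ2 : ℝ) (hσ : 0 ≤ σ2)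
    (C : ℕ → Matrix (Fin d) (Fin d) ℝ)
    (hC0 : C 0 = 0)
    (hCsymm : ∀ t, (C t).IsHermitian)
    (hCrec : ∀ t, (C (t + 1)
      - (((1 : Matrix (Fin d) (Fin d) ℝ) - γ • H) * C t *
          ((1 : Matrix (Fin d) (Fin d) ℝ) - γ • H) + (γ ^ 2 * σ2) • H)).PosSemidef) :
    ∀ t, (C t - (γ * σ2 / 2) • ((1 : Matrix (Fin d) (Fin d) ℝ)
        - ((1 : Matrix (Fin d) (Fin d) ℝ) - γ • H) ^ (2 * t))).PosSemidef :=
  variance_lower_bound_general H hH γ hγ σ2 hσ C hC0 hCrec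
end
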